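/- Let E and F be semilattices with zero and let h : E → F be a homomorphism of semilattices with zero such that ψ ∘ h is nonzero for every tight character ψ on F. Then the following are equivalent: (i) for every tight character ψ on F, the composition ψ ∘ h is a tight character on E; (ii) whenever {e₁,…,e_n} is a cover for e ∈ E, the set {h(e₁),…,h(e_n)} is a cover for h(e). -/

import Mathlib

/-- A finite subset `C` is a cover for `f`: every `c ∈ C` satisfies `c ≤ f` and every
nonzero `g ≤ f` meets some `c ∈ C`. -/
def IsCover {E : Type*} [SemilatticeInf E] [OrderBot E] (C : Finset E) (f : E) : Prop :=
  (∀ c ∈ C, c ≤ f) ∧ ∀ g : E, g ≠ ⊥ → g ≤ f → ∃ c ∈ C, g ⊓ c ≠ ⊥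

/-- The (finite) family `{v i : i ∈ C}` is a cover for `f`. -/
def IsCoverFam {ι : Type*} {E : Type*} [SemilatticeInf E] [OrderBot E]
    (C : Finset ι) (v : ι → E) (f : E) : Prop :=
  (∀ i ∈ C, v i ≤ f) ∧ ∀ g : E, g ≠ ⊥ → g ≤ f → ∃ i ∈ C, g ⊓ v i ≠ ⊥

/-- A character on a semilattice with zero: a multiplicative `{0,1}`-valued map sending
`0` to `0` and not identically zero. -/
def IsChar {E : Type*} [SemilatticeInf E] [OrderBot E] (φ : E → Bool) : Prop :=
  φ ⊥ = false ∧ (∀ e f : E, φ (e ⊓ f) = (φ e && φ f)) ∧ ∃ e : E, φ e = true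

/-- A tight character: a character such that, for every `f` and every cover `C` for `f`,
`φ f = max_{c ∈ C} φ c`. -/
def IsTightChar {E : Type*} [SemilatticeInf E] [OrderBot E] (φ : E → Bool) : Prop :=
  IsChar φ ∧ ∀ f : E, ∀ C : Finset E, IsCover C f → (φ f = true ↔ ∃ c ∈ C, φ c = true)

/-- A filter on a semilattice with zero. -/
def IsFilterOn {E : Type*} [SemilatticeInf E] [OrderBot E] (ξ : Set E) : Prop :=
  ξ.Nonempty ∧ ⊥ ∉ ξ ∧ (∀ e ∈ ξ, ∀ f ∈ ξ, e ⊓ f ∈ ξ) ∧ ∀ e ∈ ξ, ∀ f : E, e ≤ f → f ∈ ξ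

/-- A tight filter: whenever `C` is a cover for some `f ∈ ξ`, some element of `C` lies in `ξ`. -/
def IsTightFilter {E : Type*} [SemilatticeInf E] [OrderBot E] (ξ : Set E) : Prop :=
  IsFilterOn ξ ∧ ∀ f ∈ ξ, ∀ C : Finset E, IsCover C f → ∃ c ∈ C, c ∈ ξ

/-- The tight order: `e` is tightly below `f` iff there is no nonzero `g ≤ e` with `g ⊓ f = ⊥`. -/
def TightBelow {E : Type*} [SemilatticeInf E] [OrderBot E] (e f : E) : Prop :=
  ¬ ∃ g : E, g ≠ ⊥ ∧ g ≤ e ∧ g ⊓ f = ⊥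

/-- Tight equivalence. -/
def TightEquiv {E : Type*} [SemilatticeInf E] [OrderBot E] (e f : E) : Prop :=
  TightBelow e f ∧ TightBelow f e

/-- A homomorphism is tightly injective if it reflects tight equivalence. -/
def TightlyInjective {E F : Type*} [SemilatticeInf E] [OrderBot E] [SemilatticeInf F] [OrderBot F]
    (h : E → F) : Prop :=
  ∀ e₁ e₂ : E, TightEquiv (h e₁) (h e₂) → TightEquiv e₁ e₂

/-- A homomorphism is tightly surjective if its range is a large subset of the codomain:
for every `f` there is a finite `C ⊆ E` with `h e ≼ f` for all `e ∈ C` and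
`{f ⊓ h e : e ∈ C}` a cover for `f`. -/
def TightlySurjective {E F : Type*} [SemilatticeInf E] [OrderBot E] [SemilatticeInf F] [OrderBot F]
    (h : E → F) : Prop :=
  ∀ f : F, ∃ C : Finset E, (∀ e ∈ C, TightBelow (h e) f) ∧ IsCoverFam C (fun e => f ⊓ h e) f

/-- A homomorphism of semilattices with zero is tight if it satisfies conditions
(4.1.ii) and (4.3.ii) of the paper. -/
def IsTightHom {E F : Type*} [SemilatticeInf E] [OrderBot E] [SemilatticeInf F] [OrderBot F]
    (h : E → F) : Prop :=
  (∀ f : F, ∃ C : Finset E, IsCoverFam C (fun e => f ⊓ h e) f) ∧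
  (∀ e : E, ∀ C : Finset E, IsCover C e → IsCoverFam C h (h e))

/-! Tight characters on `F` detect covers: if `g ≠ 0` lies below `h e` but meets none of the
`h c`, an ultrafilter containing `g` is a tight filter, and its indicator is a tight character
`ψ` with `ψ (h e) = 1` and `ψ (h c) = 0` for all `c`, so `ψ ∘ h` is not tight. Conversely, when
`h` maps covers to covers, tightness of `ψ` on the image cover is tightness of `ψ ∘ h`. -/

section Characters

variable {E : Type*} [SemilatticeInf E] [OrderBot E] {φ : E → Bool}

theorem IsChar.apply_inf_eq_true_iff (hφ : IsChar φ) (e f : E) :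
    φ (e ⊓ f) = true ↔ φ e = true ∧ φ f = true := by
  rw [hφ.2.1, Bool.and_eq_true]

theorem IsChar.apply_eq_true_of_le (hφ : IsChar φ) {e f : E} (hef : e ≤ f)
    (he : φ e = true) : φ f = true := by
  rw [← inf_eq_left.mpr hef, hφ.apply_inf_eq_true_iff] at he
  exact he.2

theorem IsChar.ne_bot_of_apply_eq_true (hφ : IsChar φ) {e : E} (he : φ e = true) : e ≠ ⊥ := by
  rintro rfl
  simp [hφ.1] at he

theorem IsChar.comp {F : Type*} [SemilatticeInf F] [OrderBot F] {ψ : F → Bool} (hψ : IsChar ψ)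
    {h : E → F} (h0 : h ⊥ = ⊥) (hinf : ∀ a b : E, h (a ⊓ b) = h a ⊓ h b)
    (hne : ∃ e : E, ψ (h e) = true) : IsChar (fun e => ψ (h e)) :=
  ⟨by simp only [h0, hψ.1], fun a b => by simp only [hinf, hψ.2.1], hne⟩

end Characters

theorem isCoverFam_iff_isCover_image {ι E : Type*} [SemilatticeInf E] [OrderBot E]
    [DecidableEq E] {C : Finset ι} {v : ι → E} {f : E} :
    IsCoverFam C v f ↔ IsCover (C.image v) f := by
  simp only [IsCoverFam, IsCover, Finset.forall_mem_image, Finset.exists_mem_image]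

theorem IsTightChar.apply_eq_true_iff_of_isCoverFam {ι E : Type*} [SemilatticeInf E] [OrderBot E]
    {ψ : E → Bool} (hψ : IsTightChar ψ) {C : Finset ι} {v : ι → E} {f : E}
    (hC : IsCoverFam C v f) : ψ f = true ↔ ∃ i ∈ C, ψ (v i) = true := by
  classical
  rw [hψ.2 f _ (isCoverFam_iff_isCover_image.mp hC), Finset.exists_mem_image]

section Filters

variable {E : Type*} [SemilatticeInf E] [OrderBot E]

theorem isFilterOn_Ici {g : E} (hg : g ≠ ⊥) : IsFilterOn (Set.Ici g) :=
  ⟨⟨g, le_rfl⟩, fun hb => hg (le_bot_iff.mp hb), fun _ ha _ hb => le_inf ha hb,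
    fun _ ha _ hab => ha.trans hab⟩

theorem IsChain.isFilterOn_sUnion {c : Set (Set E)} (hc : ∀ ξ ∈ c, IsFilterOn ξ)
    (hchain : IsChain (· ⊆ ·) c) (hne : c.Nonempty) : IsFilterOn (⋃₀ c) := by
  obtain ⟨ξ₀, hξ₀⟩ := hne
  refine ⟨(hc ξ₀ hξ₀).1.mono (Set.subset_sUnion_of_mem hξ₀), ?_, ?_, ?_⟩
  · rintro ⟨ξ, hξ, hbot⟩
    exact (hc ξ hξ).2.1 hbot
  · rintro a ⟨ξ, hξ, ha⟩ b ⟨η, hη, hb⟩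
    rcases hchain.total hξ hη with hξη | hηξ
    · exact ⟨η, hη, (hc η hη).2.2.1 a (hξη ha) b hb⟩
    · exact ⟨ξ, hξ, (hc ξ hξ).2.2.1 a ha b (hηξ hb)⟩
  · rintro a ⟨ξ, hξ, ha⟩ f haf
    exact ⟨ξ, hξ, (hc ξ hξ).2.2.2 a ha f haf⟩

theorem exists_maximal_isFilterOn_mem {g : E} (hg : g ≠ ⊥) :
    ∃ ξ : Set E, g ∈ ξ ∧ Maximal IsFilterOn ξ := by
  obtain ⟨ξ, hgξ, hmax⟩ := zorn_subset_nonempty {ξ : Set E | IsFilterOn ξ}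
    (fun c hc hchain hne => ⟨⋃₀ c, hchain.isFilterOn_sUnion hc hne,
      fun _ => Set.subset_sUnion_of_mem⟩) _ (isFilterOn_Ici hg)
  exact ⟨ξ, hgξ le_rfl, hmax⟩

/-- An element outside an ultrafilter is disjoint from one of its members, since otherwise
adjoining it generates a strictly larger filter. -/
theorem Maximal.exists_inf_eq_bot_of_notMem {ξ : Set E} (hξ : Maximal IsFilterOn ξ) {c : E}
    (hc : c ∉ ξ) : ∃ x ∈ ξ, x ⊓ c = ⊥ := by
  by_contra! hmeet
  obtain ⟨⟨x₀, hx₀⟩, -, hinf, -⟩ := hξ.1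
  set η : Set E := {y | ∃ x ∈ ξ, x ⊓ c ≤ y}
  have hξη : ξ ⊆ η := fun x hx => ⟨x, hx, inf_le_left⟩
  have hcη : c ∈ η := ⟨x₀, hx₀, inf_le_right⟩
  have hη : IsFilterOn η := by
    refine ⟨⟨c, hcη⟩, fun ⟨x, hx, hxc⟩ => hmeet x hx (le_bot_iff.mp hxc), ?_, ?_⟩
    · rintro a ⟨x, hx, hxa⟩ b ⟨y, hy, hyb⟩
      exact ⟨x ⊓ y, hinf x hx y hy, le_inf ((inf_le_inf_right c inf_le_left).trans hxa)
        ((inf_le_inf_right c inf_le_right).trans hyb)⟩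
    · rintro a ⟨x, hx, hxa⟩ f haf
      exact ⟨x, hx, hxa.trans haf⟩
  exact hc (hξ.2 hη hξη hcη)

theorem Maximal.exists_forall_inf_eq_bot {ξ : Set E} (hξ : Maximal IsFilterOn ξ)
    (C : Finset E) (hC : ∀ c ∈ C, c ∉ ξ) : ∃ x ∈ ξ, ∀ c ∈ C, x ⊓ c = ⊥ := by
  classical
  obtain ⟨⟨x₀, hx₀⟩, -, hinf, -⟩ := hξ.1
  induction C using Finset.induction_on with
  | empty => exact ⟨x₀, hx₀, by simp⟩
  | insert c C _ ih =>
    obtain ⟨x, hx, hxC⟩ := ih fun d hd => hC d (Finset.mem_insert_of_mem hd)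
    obtain ⟨y, hy, hyc⟩ := hξ.exists_inf_eq_bot_of_notMem (hC c (Finset.mem_insert_self c C))
    refine ⟨x ⊓ y, hinf x hx y hy, (Finset.forall_mem_insert _ _ _).mpr ⟨?_, fun d hd => ?_⟩⟩
    · exact le_bot_iff.mp (hyc ▸ inf_le_inf_right c inf_le_right)
    · exact le_bot_iff.mp (hxC d hd ▸ inf_le_inf_right d inf_le_left)

theorem Maximal.isTightFilter {ξ : Set E} (hξ : Maximal IsFilterOn ξ) : IsTightFilter ξ := by
  refine ⟨hξ.1, fun f hf C hC => ?_⟩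
  by_contra! hCξ
  obtain ⟨x, hx, hxC⟩ := hξ.exists_forall_inf_eq_bot C hCξ
  have hxf : x ⊓ f ∈ ξ := hξ.1.2.2.1 x hx f hf
  obtain ⟨c, hc, hmeet⟩ := hC.2 (x ⊓ f) (fun hb => hξ.1.2.1 (hb ▸ hxf)) inf_le_right
  exact hmeet (le_bot_iff.mp (hxC c hc ▸ inf_le_inf_right c inf_le_left))

theorem IsTightFilter.isTightChar {ξ : Set E} [DecidablePred (· ∈ ξ)] (hξ : IsTightFilter ξ) :
    IsTightChar (fun e => decide (e ∈ ξ)) := by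
  obtain ⟨⟨⟨x, hx⟩, hbot, hinf, hup⟩, htight⟩ := hξ
  refine ⟨⟨by simpa using hbot, fun a b => ?_, ⟨x, by simpa using hx⟩⟩, fun f C hC => ?_⟩
  · have hiff : a ⊓ b ∈ ξ ↔ a ∈ ξ ∧ b ∈ ξ :=
      ⟨fun hab => ⟨hup _ hab a inf_le_left, hup _ hab b inf_le_right⟩,
        fun ⟨ha, hb⟩ => hinf a ha b hb⟩
    simp only [hiff, Bool.decide_and]
  · simp only [decide_eq_true_eq]
    exact ⟨fun hf => htight f hf C hC, fun ⟨c, hc, hcξ⟩ => hup c hcξ f (hC.1 c hc)⟩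

end Filters

theorem exists_isTightChar_apply_eq_true {E : Type*} [SemilatticeInf E] [OrderBot E] {g : E}
    (hg : g ≠ ⊥) : ∃ ψ : E → Bool, IsTightChar ψ ∧ ψ g = true := by
  classical
  obtain ⟨ξ, hgξ, hξ⟩ := exists_maximal_isFilterOn_mem hg
  exact ⟨_, hξ.isTightFilter.isTightChar, decide_eq_true hgξ⟩

theorem isCoverFam_of_forall_isTightChar {ι E : Type*} [SemilatticeInf E] [OrderBot E]
    {C : Finset ι} {v : ι → E} {f : E} (hle : ∀ i ∈ C, v i ≤ f)
    (htight : ∀ ψ : E → Bool, IsTightChar ψ → ψ f = true → ∃ i ∈ C, ψ (v i) = true) :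
    IsCoverFam C v f := by
  refine ⟨hle, fun g hg hgf => ?_⟩
  obtain ⟨ψ, hψ, hψg⟩ := exists_isTightChar_apply_eq_true hg
  obtain ⟨i, hi, hψi⟩ := htight ψ hψ (hψ.1.apply_eq_true_of_le hgf hψg)
  exact ⟨i, hi, hψ.1.ne_bot_of_apply_eq_true ((hψ.1.apply_inf_eq_true_iff _ _).mpr ⟨hψg, hψi⟩)⟩

/-- Let `h : E → F` be a homomorphism of semilattices with zero such that
`ψ ∘ h` is nonzero for every tight character `ψ` on `F`. Then the following are
equivalent: (i) for every tight character `ψ` on `F`, `ψ ∘ h` is a tight character on `E`;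
(ii) whenever `C` is a cover for `e ∈ E`, the family `{h c : c ∈ C}` is a cover for `h e`. -/
theorem tight_cond_two_iff {E F : Type*} [SemilatticeInf E] [OrderBot E]
    [SemilatticeInf F] [OrderBot F]
    (h : E → F) (h0 : h ⊥ = ⊥) (hinf : ∀ a b : E, h (a ⊓ b) = h a ⊓ h b)
    (hnz : ∀ ψ : F → Bool, IsTightChar ψ → ∃ e : E, ψ (h e) = true) :
    (∀ ψ : F → Bool, IsTightChar ψ → IsTightChar (fun e => ψ (h e))) ↔
    (∀ e : E, ∀ C : Finset E, IsCover C e → IsCoverFam C h (h e)) := by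
  have hmono : Monotone h := fun a b hab => by
    rw [← inf_eq_left.mpr hab, hinf]
    exact inf_le_right
  constructor
  · intro hcomp e C hC
    exact isCoverFam_of_forall_isTightChar (fun c hc => hmono (hC.1 c hc))
      fun ψ hψ => ((hcomp ψ hψ).2 e C hC).mp
  · intro hcover ψ hψ
    exact ⟨hψ.1.comp h0 hinf (hnz ψ hψ),
      fun e C hC => hψ.apply_eq_true_iff_of_isCoverFam (hcover e C hC)⟩
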